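/- arXiv:1703.06168 — 3 statements merged into one kernel-verified Lean document; each statement's English description precedes it below -/
import Mathlib

section
/- (Wall-crossing lemma, wall of type (C1).) Let g ≥ 1 be an integer and let (n, d) be invariants with |n| > 0 satisfying condition (C0) and the convention that d_i = 0 whenever n_i = 0. Let α ∈ Stability_n^d(g), and suppose for some 0 ≤ k < r with Σ_{i=0}^k n_i > 0 and Σ_{i=k+1}^r n_i > 0 equality holds in (C1): (Σ_{i=0}^k (d_i + α_i n_i)) / (Σ_{i=0}^k n_i) = μ_α(n, d). Define (n′, d′) by n′_i = n_i, d′_i = d_i for 0 ≤ i ≤ k and n′_i = 0, d′_i = 0 for k < i ≤ r, and set (n″, d″) := (n − n′, d − d′). Then (n′, d′) and (n″, d″) each satisfy (C0), and α satisfies (C1), (C2), (C3) with respect to each of (n′, d′) and (n″, d″); in particular α ∈ Stability_{n′}^{d′}(g) and α ∈ Stability_{n″}^{d″}(g). -/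
open Finset

/-- The α-slope of chain invariants `(n, d)` of length `r`. -/
noncomputable def mu (r : ℕ) (n : ℕ → ℕ) (d : ℕ → ℤ) (α : ℕ → ℝ) : ℝ :=
  ((∑ i ∈ range (r + 1), (d i : ℝ)) + ∑ i ∈ range (r + 1), α i * (n i : ℝ)) /
    ∑ i ∈ range (r + 1), (n i : ℝ)

/-- Condition (C0): whenever `n i = n (i-1)` we have `d i ≤ d (i-1)`. -/
def CondC0 (r : ℕ) (n : ℕ → ℕ) (d : ℕ → ℤ) : Prop :=
  ∀ i, 1 ≤ i → i ≤ r → n i = n (i - 1) → d i ≤ d (i - 1)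

/-- Condition (C1): the slopes of the truncated subchains are at most `μ_α(n,d)`. -/
def CondC1 (r : ℕ) (n : ℕ → ℕ) (d : ℕ → ℤ) (α : ℕ → ℝ) : Prop :=
  ∀ k, k < r → 0 < ∑ i ∈ range (k + 1), (n i : ℝ) →
    (∑ i ∈ range (k + 1), ((d i : ℝ) + α i * n i)) / (∑ i ∈ range (k + 1), (n i : ℝ)) ≤
      mu r n d α

/-- Condition (C2): the slopes of the standard subchains of type 2 are at most
`μ_α(n,d)`. -/
def CondC2 (r : ℕ) (n : ℕ → ℕ) (d : ℕ → ℤ) (α : ℕ → ℝ) : Prop :=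
  ∀ k j, k < j → j ≤ r → (∀ i ∈ Icc k (j - 1), n j < n i) →
    0 < (∑ i ∈ range (r + 1) \ Icc k j, (n i : ℝ)) + ((j : ℝ) - k + 1) * n j →
    ((∑ i ∈ range (r + 1) \ Icc k j, ((d i : ℝ) + α i * n i)) +
        ((j : ℝ) - k + 1) * d j + (∑ i ∈ Icc k j, α i) * n j) /
      ((∑ i ∈ range (r + 1) \ Icc k j, (n i : ℝ)) + ((j : ℝ) - k + 1) * n j) ≤
      mu r n d α

/-- Condition (C3): the slopes of the standard subchains of type 4 are at most
`μ_α(n,d)`. -/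
def CondC3 (r : ℕ) (n : ℕ → ℕ) (d : ℕ → ℤ) (α : ℕ → ℝ) : Prop :=
  ∀ k j, k < j → j ≤ r → (∀ i ∈ Icc (k + 1) j, n k < n i) →
    (∑ i ∈ Icc (k + 1) j, ((d i : ℝ) - d k + α i * ((n i : ℝ) - n k))) /
        (∑ i ∈ Icc (k + 1) j, ((n i : ℝ) - n k)) ≤ mu r n d α

/-- The stability region `Stability_n^d(g)`: normalized parameters `α` with
`α_0 = 0`, `α_i - α_{i-1} > 2g - 2`, satisfying conditions (C1), (C2), (C3). -/
def StabilityRegion (r : ℕ) (n : ℕ → ℕ) (d : ℕ → ℤ) (g : ℤ) : Set (ℕ → ℝ) :=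
  {α | α 0 = 0 ∧ (∀ i, 1 ≤ i → i ≤ r → α i - α (i - 1) > 2 * (g : ℝ) - 2) ∧
    CondC1 r n d α ∧ CondC2 r n d α ∧ CondC3 r n d α}


/-!
On the wall, the head `(n', d')` has slope exactly `μ = μ_α(n, d)`, hence so does the tail
`(n'', d'')`, because the slope of `(n, d)` is the mediant of the two. Each inequality of
(C1)–(C3) for one piece then comes from an inequality for `(n, d)`: either it is the same
inequality, or the other piece, of slope exactly `μ`, has to be added to numerator and
denominator, which does not affect comparison with `μ`, or it is an inequality (C1) for `(n, d)`,
possibly with the head removed. Condition (C0) for the pieces is new only at the cut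
`i = k + 1`, where the convention `d_i = 0` whenever `n_i = 0` settles it.
-/

lemma div_le_of_add_div_le {a b c e μ : ℝ} (hb : 0 < b) (he : 0 ≤ e) (hce : c = μ * e)
    (h : (a + c) / (b + e) ≤ μ) : a / b ≤ μ := by
  rw [div_le_iff₀ (by linarith)] at h
  rw [div_le_iff₀ hb]
  linarith

section Pieces

variable {M : Type*} [Zero M] {k i : ℕ}

-- The paper's `(n', d')` is `(truncLE k n, truncLE k d)` and `(n'', d'')` is
-- `(truncGT k n, truncGT k d)`.
def truncLE (k : ℕ) (f : ℕ → M) (i : ℕ) : M := if i ≤ k then f i else 0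

def truncGT (k : ℕ) (f : ℕ → M) (i : ℕ) : M := if i ≤ k then 0 else f i

lemma truncLE_of_le (f : ℕ → M) (h : i ≤ k) : truncLE k f i = f i := if_pos h

lemma truncLE_of_lt (f : ℕ → M) (h : k < i) : truncLE k f i = 0 := if_neg h.not_ge

lemma truncGT_of_le (f : ℕ → M) (h : i ≤ k) : truncGT k f i = 0 := if_pos h

lemma truncGT_of_lt (f : ℕ → M) (h : k < i) : truncGT k f i = f i := if_neg h.not_ge

end Pieces

section Sums

variable (k : ℕ) (s : Finset ℕ) (n : ℕ → ℕ) (d : ℕ → ℤ) (α : ℕ → ℝ)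

lemma sum_cast_truncLE :
    ∑ i ∈ s, ((truncLE k n i : ℕ) : ℝ) = ∑ i ∈ s with i ≤ k, (n i : ℝ) := by
  rw [sum_filter]
  exact sum_congr rfl fun i _ => by unfold truncLE; split_ifs <;> simp

lemma sum_cast_truncGT :
    ∑ i ∈ s, ((truncGT k n i : ℕ) : ℝ) = ∑ i ∈ s with ¬i ≤ k, (n i : ℝ) := by
  rw [sum_filter]
  exact sum_congr rfl fun i _ => by unfold truncGT; split_ifs <;> simp

lemma sum_weight_truncLE :
    ∑ i ∈ s, (((truncLE k d i : ℤ) : ℝ) + α i * (truncLE k n i : ℕ)) =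
      ∑ i ∈ s with i ≤ k, ((d i : ℝ) + α i * n i) := by
  rw [sum_filter]
  exact sum_congr rfl fun i _ => by unfold truncLE; split_ifs <;> simp

lemma sum_weight_truncGT :
    ∑ i ∈ s, (((truncGT k d i : ℤ) : ℝ) + α i * (truncGT k n i : ℕ)) =
      ∑ i ∈ s with ¬i ≤ k, ((d i : ℝ) + α i * n i) := by
  rw [sum_filter]
  exact sum_congr rfl fun i _ => by unfold truncGT; split_ifs <;> simp

lemma filter_range_le (r : ℕ) : {i ∈ range (r + 1) | i ≤ k} = range (min r k + 1) := by
  ext i; simp only [mem_filter, mem_range]; omega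

lemma filter_range_not_le (r : ℕ) : {i ∈ range (r + 1) | ¬i ≤ k} = Icc (k + 1) r := by
  ext i; simp only [mem_filter, mem_range, mem_Icc]; omega

lemma sum_range_eq_add_sum_Icc {M : Type*} [AddCommMonoid M] (f : ℕ → M) {r : ℕ}
    (hk : k ≤ r) :
    ∑ i ∈ range (r + 1), f i = ∑ i ∈ range (k + 1), f i + ∑ i ∈ Icc (k + 1) r, f i := by
  rw [← sum_range_add_sum_Ico f (by omega : k + 1 ≤ r + 1), Ico_add_one_right_eq_Icc]

end Sums

section Slopes

variable {r k : ℕ} {n : ℕ → ℕ} {d : ℕ → ℤ} {α : ℕ → ℝ}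

lemma mu_eq_div (r : ℕ) (n : ℕ → ℕ) (d : ℕ → ℤ) (α : ℕ → ℝ) :
    mu r n d α = (∑ i ∈ range (r + 1), ((d i : ℝ) + α i * n i)) /
      ∑ i ∈ range (r + 1), (n i : ℝ) := by
  rw [mu, sum_add_distrib]

lemma mu_truncLE (hk : k ≤ r) :
    mu r (truncLE k n) (truncLE k d) α = (∑ i ∈ range (k + 1), ((d i : ℝ) + α i * n i)) /
      ∑ i ∈ range (k + 1), (n i : ℝ) := by
  rw [mu_eq_div, sum_weight_truncLE, sum_cast_truncLE, filter_range_le, min_eq_right hk]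

lemma mu_truncGT :
    mu r (truncGT k n) (truncGT k d) α = (∑ i ∈ Icc (k + 1) r, ((d i : ℝ) + α i * n i)) /
      ∑ i ∈ Icc (k + 1) r, (n i : ℝ) := by
  rw [mu_eq_div, sum_weight_truncGT, sum_cast_truncGT, filter_range_not_le]

lemma sum_weight_Icc_eq_of_wall (hk : k ≤ r) (h1 : 0 < ∑ i ∈ range (k + 1), (n i : ℝ))
    (hLE : ∑ i ∈ range (k + 1), ((d i : ℝ) + α i * n i) =
      mu r n d α * ∑ i ∈ range (k + 1), (n i : ℝ)) :
    ∑ i ∈ Icc (k + 1) r, ((d i : ℝ) + α i * n i) =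
      mu r n d α * ∑ i ∈ Icc (k + 1) r, (n i : ℝ) := by
  have hN := sum_range_eq_add_sum_Icc k (fun i => (n i : ℝ)) hk
  have hW := sum_range_eq_add_sum_Icc k (fun i => (d i : ℝ) + α i * n i) hk
  have hpos : 0 < ∑ i ∈ range (r + 1), (n i : ℝ) := by
    rw [hN]; exact add_pos_of_pos_of_nonneg h1 (sum_nonneg fun i _ => by positivity)
  have htotal := mu_eq_div r n d α
  rw [eq_div_iff hpos.ne', hN, hW, mul_add] at htotal
  linarith

lemma sum_weight_Icc_le_of_wall (hC1 : CondC1 r n d α)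
    (h1 : 0 < ∑ i ∈ range (k + 1), (n i : ℝ))
    (hLE : ∑ i ∈ range (k + 1), ((d i : ℝ) + α i * n i) =
      mu r n d α * ∑ i ∈ range (k + 1), (n i : ℝ))
    (hGT : ∑ i ∈ Icc (k + 1) r, ((d i : ℝ) + α i * n i) =
      mu r n d α * ∑ i ∈ Icc (k + 1) r, (n i : ℝ)) (b : ℕ) (hkb : k < b) (hbr : b ≤ r) :
    ∑ i ∈ Icc (k + 1) b, ((d i : ℝ) + α i * n i) ≤
      mu r n d α * ∑ i ∈ Icc (k + 1) b, (n i : ℝ) := by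
  rcases hbr.eq_or_lt with rfl | hbr
  · exact hGT.le
  have hN := sum_range_eq_add_sum_Icc k (fun i => (n i : ℝ)) hkb.le
  have hW := sum_range_eq_add_sum_Icc k (fun i => (d i : ℝ) + α i * n i) hkb.le
  have hpos : 0 < ∑ i ∈ range (b + 1), (n i : ℝ) := by
    rw [hN]; exact add_pos_of_pos_of_nonneg h1 (sum_nonneg fun i _ => by positivity)
  have hC1b := hC1 b hbr hpos
  rw [div_le_iff₀ hpos, hN, hW, mul_add] at hC1b
  linarith

end Slopes

section Conditions

variable {r k : ℕ} {n : ℕ → ℕ} {d : ℕ → ℤ} {α : ℕ → ℝ}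

theorem condC0_truncLE (hC0 : CondC0 r n d) (hconv : ∀ i, i ≤ r → n i = 0 → d i = 0) :
    CondC0 r (truncLE k n) (truncLE k d) := by
  intro i hi hir hn
  unfold truncLE at hn ⊢
  split_ifs at hn ⊢ with hik hik'
  · exact hC0 i hi hir hn
  · omega
  · rw [hconv (i - 1) (by omega) hn.symm]
  · rfl

theorem condC0_truncGT (hC0 : CondC0 r n d) (hconv : ∀ i, i ≤ r → n i = 0 → d i = 0) :
    CondC0 r (truncGT k n) (truncGT k d) := by
  intro i hi hir hn
  unfold truncGT at hn ⊢
  split_ifs at hn ⊢ with hik hik'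
  · rfl
  · omega
  · rw [hconv i hir hn]
  · exact hC0 i hi hir hn

theorem condC1_truncLE (hC1 : CondC1 r n d α) (hk : k ≤ r)
    (hμ : mu r (truncLE k n) (truncLE k d) α = mu r n d α) :
    CondC1 r (truncLE k n) (truncLE k d) α := by
  intro a ha hpos
  rw [sum_cast_truncLE, filter_range_le] at hpos
  rw [sum_weight_truncLE, sum_cast_truncLE, filter_range_le]
  rcases le_total a k with hak | hka
  · rw [min_eq_left hak] at hpos ⊢
    exact hμ ▸ hC1 a ha hpos
  · rw [min_eq_right hka, mu_truncLE hk]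

theorem condC1_truncGT (hμ : mu r (truncGT k n) (truncGT k d) α = mu r n d α)
    (hseg : ∀ b, k < b → b ≤ r → ∑ i ∈ Icc (k + 1) b, ((d i : ℝ) + α i * n i) ≤
      mu r n d α * ∑ i ∈ Icc (k + 1) b, (n i : ℝ)) :
    CondC1 r (truncGT k n) (truncGT k d) α := by
  intro a ha hpos
  rw [sum_cast_truncGT, filter_range_not_le] at hpos
  rw [sum_weight_truncGT, sum_cast_truncGT, filter_range_not_le, hμ, div_le_iff₀ hpos]
  have hka : k < a := by
    by_contra! hak
    rw [Icc_eq_empty (by omega), sum_empty] at hpos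
    exact lt_irrefl 0 hpos
  exact hseg a hka ha.le

theorem condC2_truncLE (hC1 : CondC1 r n d α) (hC2 : CondC2 r n d α) (hk : k < r)
    (hμ : mu r (truncLE k n) (truncLE k d) α = mu r n d α)
    (hGT : ∑ i ∈ Icc (k + 1) r, ((d i : ℝ) + α i * n i) =
      mu r n d α * ∑ i ∈ Icc (k + 1) r, (n i : ℝ)) :
    CondC2 r (truncLE k n) (truncLE k d) α := by
  intro a b hab hbr hlt hpos
  rw [sum_cast_truncLE] at hpos
  rw [sum_weight_truncLE, sum_cast_truncLE, hμ]
  by_cases hbk : b ≤ k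
  · have hlt' : ∀ i ∈ Icc a (b - 1), n b < n i := fun i hi => by
      simpa (disch := grind) only [truncLE_of_le] using hlt i hi
    have hS : {i ∈ range (r + 1) \ Icc a b | ¬i ≤ k} = Icc (k + 1) r := by
      ext i; simp only [mem_filter, mem_sdiff, mem_range, mem_Icc]; omega
    have hN := sum_filter_add_sum_filter_not (range (r + 1) \ Icc a b) (· ≤ k)
      (fun i => (n i : ℝ))
    have hW := sum_filter_add_sum_filter_not (range (r + 1) \ Icc a b) (· ≤ k)
      (fun i => (d i : ℝ) + α i * n i)
    rw [hS] at hN hW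
    rw [truncLE_of_le _ hbk] at hpos
    rw [truncLE_of_le _ hbk, truncLE_of_le _ hbk]
    have hGT₀ : 0 ≤ ∑ i ∈ Icc (k + 1) r, (n i : ℝ) := sum_nonneg fun i _ => by positivity
    refine div_le_of_add_div_le hpos hGT₀ hGT ?_
    convert hC2 a b hab hbr hlt' (by linarith) using 2 <;> linarith
  · obtain rfl : b = k + 1 := by
      by_contra hne
      have := hlt (b - 1) (by simp only [mem_Icc]; omega)
      simp only [truncLE_of_lt _ (by omega : k < b), truncLE_of_lt _ (by omega : k < b - 1)]
        at this
      exact lt_irrefl 0 this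
    have hS : {i ∈ range (r + 1) \ Icc a (k + 1) | i ≤ k} = range a := by
      ext i; simp only [mem_filter, mem_sdiff, mem_range, mem_Icc]; omega
    simp only [hS, truncLE_of_lt _ (Nat.lt_succ_self k), Nat.cast_zero, Int.cast_zero,
      mul_zero, add_zero] at hpos ⊢
    obtain ⟨c, rfl⟩ : ∃ c, a = c + 1 := Nat.exists_eq_add_one.2 <| Nat.pos_of_ne_zero <| by
      rintro rfl
      simp only [range_zero, sum_empty, lt_self_iff_false] at hpos
    exact hC1 c (by omega) hpos

theorem condC2_truncGT (hC2 : CondC2 r n d α)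
    (hμ : mu r (truncGT k n) (truncGT k d) α = mu r n d α)
    (hLE : ∑ i ∈ range (k + 1), ((d i : ℝ) + α i * n i) =
      mu r n d α * ∑ i ∈ range (k + 1), (n i : ℝ)) :
    CondC2 r (truncGT k n) (truncGT k d) α := by
  intro a b hab hbr hlt hpos
  have hka : k < a := by
    by_contra! hak
    have := hlt a (by simp only [mem_Icc]; omega)
    rw [truncGT_of_le _ hak] at this
    exact Nat.not_lt_zero _ this
  have hlt' : ∀ i ∈ Icc a (b - 1), n b < n i := fun i hi => by
    simpa (disch := grind) only [truncGT_of_lt] using hlt i hi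
  have hS : {i ∈ range (r + 1) \ Icc a b | i ≤ k} = range (k + 1) := by
    ext i; simp only [mem_filter, mem_sdiff, mem_range, mem_Icc]; omega
  have hN := sum_filter_add_sum_filter_not (range (r + 1) \ Icc a b) (· ≤ k)
    (fun i => (n i : ℝ))
  have hW := sum_filter_add_sum_filter_not (range (r + 1) \ Icc a b) (· ≤ k)
    (fun i => (d i : ℝ) + α i * n i)
  rw [hS] at hN hW
  rw [sum_cast_truncGT, truncGT_of_lt _ (hka.trans hab)] at hpos
  rw [sum_weight_truncGT, sum_cast_truncGT, hμ, truncGT_of_lt _ (hka.trans hab),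
    truncGT_of_lt _ (hka.trans hab)]
  have hLE₀ : 0 ≤ ∑ i ∈ range (k + 1), (n i : ℝ) := sum_nonneg fun i _ => by positivity
  refine div_le_of_add_div_le hpos hLE₀ hLE ?_
  convert hC2 a b hab hbr hlt' (by linarith) using 2 <;> linarith

theorem condC3_truncLE (hC3 : CondC3 r n d α)
    (hμ : mu r (truncLE k n) (truncLE k d) α = mu r n d α) :
    CondC3 r (truncLE k n) (truncLE k d) α := by
  intro a b hab hbr hlt
  have hbk : b ≤ k := by
    by_contra! hkb
    have := hlt b (by simp only [mem_Icc]; omega)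
    rw [truncLE_of_lt _ hkb] at this
    exact Nat.not_lt_zero _ this
  have hlt' : ∀ i ∈ Icc (a + 1) b, n a < n i := fun i hi => by
    simpa (disch := grind) only [truncLE_of_le] using hlt i hi
  rw [hμ]
  simp (disch := grind) only [truncLE_of_le]
  exact hC3 a b hab hbr hlt'

theorem condC3_truncGT (hC3 : CondC3 r n d α)
    (hμ : mu r (truncGT k n) (truncGT k d) α = mu r n d α)
    (hseg : ∀ b, k < b → b ≤ r → ∑ i ∈ Icc (k + 1) b, ((d i : ℝ) + α i * n i) ≤
      mu r n d α * ∑ i ∈ Icc (k + 1) b, (n i : ℝ)) :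
    CondC3 r (truncGT k n) (truncGT k d) α := by
  intro a b hab hbr hlt
  rw [hμ]
  rcases lt_or_ge k a with hka | hak
  · have hlt' : ∀ i ∈ Icc (a + 1) b, n a < n i := fun i hi => by
      simpa (disch := grind) only [truncGT_of_lt] using hlt i hi
    simp (disch := grind) only [truncGT_of_lt]
    exact hC3 a b hab hbr hlt'
  · obtain rfl : a = k := by
      by_contra hne
      have := hlt (a + 1) (by simp only [mem_Icc]; omega)
      simp only [truncGT_of_le _ hak, truncGT_of_le _ (by omega : a + 1 ≤ k)] at this
      exact lt_irrefl 0 this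
    have hpos : 0 < ∑ i ∈ Icc (a + 1) b, (n i : ℝ) := by
      refine sum_pos (fun i hi => ?_) ⟨b, by simp only [mem_Icc]; omega⟩
      simpa (disch := grind) only [truncGT_of_le, truncGT_of_lt, Nat.cast_pos] using hlt i hi
    simp (disch := grind) only [truncGT_of_lt, truncGT_of_le, Int.cast_zero, Nat.cast_zero,
      sub_zero]
    rw [div_le_iff₀ hpos]
    exact hseg b hab hbr

end Conditions

theorem wall_crossing_C1_general (r : ℕ) (n : ℕ → ℕ) (d : ℕ → ℤ) (α : ℕ → ℝ) (g : ℤ)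
    (hC0 : CondC0 r n d)
    (hconv : ∀ i, i ≤ r → n i = 0 → d i = 0)
    (hα : α ∈ StabilityRegion r n d g)
    (k : ℕ) (hk : k < r)
    (h1 : 0 < ∑ i ∈ range (k + 1), n i)
    (h2 : 0 < ∑ i ∈ Icc (k + 1) r, n i)
    (heq : (∑ i ∈ range (k + 1), ((d i : ℝ) + α i * n i)) /
        (∑ i ∈ range (k + 1), (n i : ℝ)) = mu r n d α) :
    CondC0 r (fun i => if i ≤ k then n i else 0) (fun i => if i ≤ k then d i else 0) ∧
    CondC0 r (fun i => if i ≤ k then 0 else n i) (fun i => if i ≤ k then 0 else d i) ∧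
    α ∈ StabilityRegion r (fun i => if i ≤ k then n i else 0)
        (fun i => if i ≤ k then d i else 0) g ∧
    α ∈ StabilityRegion r (fun i => if i ≤ k then 0 else n i)
        (fun i => if i ≤ k then 0 else d i) g := by
  obtain ⟨hα0, hgap, hC1, hC2, hC3⟩ := hα
  have h1' : 0 < ∑ i ∈ range (k + 1), (n i : ℝ) := by exact_mod_cast h1
  have h2' : 0 < ∑ i ∈ Icc (k + 1) r, (n i : ℝ) := by exact_mod_cast h2
  have hLE := (div_eq_iff h1'.ne').1 heq
  have hGT := sum_weight_Icc_eq_of_wall hk.le h1' hLE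
  have hseg := sum_weight_Icc_le_of_wall hC1 h1' hLE hGT
  have hμLE : mu r (truncLE k n) (truncLE k d) α = mu r n d α := by rw [mu_truncLE hk.le, heq]
  have hμGT : mu r (truncGT k n) (truncGT k d) α = mu r n d α := by
    rw [mu_truncGT, hGT, mul_div_cancel_right₀ _ h2'.ne']
  exact ⟨condC0_truncLE hC0 hconv, condC0_truncGT hC0 hconv,
    ⟨hα0, hgap, condC1_truncLE hC1 hk.le hμLE, condC2_truncLE hC1 hC2 hk hμLE hGT,
      condC3_truncLE hC3 hμLE⟩,
    ⟨hα0, hgap, condC1_truncGT hμGT hseg, condC2_truncGT hC2 hμGT hLE,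
      condC3_truncGT hC3 hμGT hseg⟩⟩

/-- Wall-crossing lemma, wall of type (C1): if `α ∈ Stability_n^d(g)` lies on a wall
given by equality in (C1) at index `k`, then the invariants of the corresponding
standard subchain and quotient each satisfy (C0), and `α` lies in their stability
regions. -/
theorem wall_crossing_C1 (r : ℕ) (n : ℕ → ℕ) (d : ℕ → ℤ) (α : ℕ → ℝ) (g : ℤ)
    (hg : 1 ≤ g)
    (hn : 0 < ∑ i ∈ range (r + 1), n i)
    (hC0 : CondC0 r n d)
    (hconv : ∀ i, i ≤ r → n i = 0 → d i = 0)
    (hα : α ∈ StabilityRegion r n d g)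
    (k : ℕ) (hk : k < r)
    (h1 : 0 < ∑ i ∈ range (k + 1), n i)
    (h2 : 0 < ∑ i ∈ Icc (k + 1) r, n i)
    (heq : (∑ i ∈ range (k + 1), ((d i : ℝ) + α i * n i)) /
        (∑ i ∈ range (k + 1), (n i : ℝ)) = mu r n d α) :
    CondC0 r (fun i => if i ≤ k then n i else 0) (fun i => if i ≤ k then d i else 0) ∧
    CondC0 r (fun i => if i ≤ k then 0 else n i) (fun i => if i ≤ k then 0 else d i) ∧
    α ∈ StabilityRegion r (fun i => if i ≤ k then n i else 0)
        (fun i => if i ≤ k then d i else 0) g ∧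
    α ∈ StabilityRegion r (fun i => if i ≤ k then 0 else n i)
        (fun i => if i ≤ k then 0 else d i) g :=
  wall_crossing_C1_general r n d α g hC0 hconv hα k hk h1 h2 heq
end

section
/- (Wall-crossing lemma, wall of type (C3).) Let g ≥ 1 be an integer and let (n, d) be invariants with |n| > 0 satisfying condition (C0) and the convention that d_i = 0 whenever n_i = 0. Let α ∈ Stability_n^d(g), and suppose for some 0 ≤ k < j ≤ r with n_k < min{n_{k+1}, …, n_j} equality holds in (C3): (Σ_{i=k+1}^j (d_i − d_k + α_i(n_i − n_k))) / (Σ_{i=k+1}^j (n_i − n_k)) = μ_α(n, d). Define the standard-quotient invariants (n″, d″) by n″_i = n_i, d″_i = d_i for i ∉ [k,j] and n″_i = n_k, d″_i = d_k for i ∈ [k,j]; assume |n″| > 0, and set (n′, d′) := (n − n″, d − d″). Then (n′, d′) and (n″, d″) each satisfy (C0), and α satisfies (C1), (C2), (C3) with respect to each of (n′, d′) and (n″, d″); in particular α ∈ Stability_{n′}^{d′}(g) and α ∈ Stability_{n″}^{d″}(g). -/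
open Finset

/-!
Write `excess n d α μ c i = d_c + (α_i - μ) n_c`. Every test slope in (C1)–(C3) has the form
`∑ ± (d_c + α_i n_c) / ∑ ± n_c` over signed pairs `(c, i)` (entry `c` of the chain placed at
level `i`), so it is `≤ μ` exactly when the corresponding signed sum of excesses is `≤ 0`, and
these sums are additive in the chain. Equality in (C3) at `(k, j)` says that the excesses of `(n', d')`,
which lives on `(k, j]` and there equals `(n - n_k, d - d_k)`, sum to zero; hence so do those of
`(n'', d'') = (n, d) - (n', d')`, and both chains have slope `μ`.

A test for `(n', d')` is a test for `(n, d)` up to the wall sum. The same holds for a test for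
`(n'', d'')`, unless its interval ends inside the block `[k, j]`, where `n''` is constant. Along
the block the summands of such a test are `excess k i - excess c i` with `n_c ≤ n_k`, which is
monotone in `i` because `α` increases (`2g - 2 ≥ 0`); so the test sum is convex in the position
of the endpoint and is bounded by its values at the two ends of the block, both tests for
`(n, d)`.
-/

theorem add_sum_Ico_nonpos_of_monotoneOn {G : ℕ → ℝ} {a t b : ℕ} {P : ℝ}
    (hG : MonotoneOn G (Set.Ico a b)) (hat : a ≤ t) (htb : t ≤ b)
    (hP : P ≤ 0) (hPb : P + ∑ i ∈ Ico a b, G i ≤ 0) : P + ∑ i ∈ Ico a t, G i ≤ 0 := by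
  obtain rfl | htb := htb.eq_or_lt
  · exact hPb
  have hsplit := sum_Ico_consecutive G hat htb.le
  rcases le_or_gt 0 (G t) with hGt | hGt
  · have : 0 ≤ ∑ i ∈ Ico t b, G i := sum_nonneg fun i hi => by
      rw [mem_Ico] at hi
      exact hGt.trans (hG ⟨hat, htb⟩ ⟨hat.trans hi.1, hi.2⟩ hi.1)
    linarith
  · have : ∑ i ∈ Ico a t, G i ≤ 0 := sum_nonpos fun i hi => by
      rw [mem_Ico] at hi
      exact (hG ⟨hi.1, hi.2.trans htb⟩ ⟨hat, htb⟩ hi.2.le).trans hGt.le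
    linarith

theorem monotoneOn_Iic_of_sub_gt {r : ℕ} {α : ℕ → ℝ} {g : ℤ} (hg : 1 ≤ g)
    (hstep : ∀ i, 1 ≤ i → i ≤ r → α i - α (i - 1) > 2 * (g : ℝ) - 2) :
    MonotoneOn α (Set.Iic r) :=
  monotoneOn_of_le_add_one Set.ordConnected_Iic fun i _ _ hi => by
    have := hstep (i + 1) (by omega) hi
    have : (1 : ℝ) ≤ g := by exact_mod_cast hg
    simp only [add_tsub_cancel_right] at *
    linarith

def excess (n : ℕ → ℕ) (d : ℕ → ℤ) (α : ℕ → ℝ) (μ : ℝ) (c i : ℕ) : ℝ :=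
  d c + (α i - μ) * n c

def ExcessC1 (r : ℕ) (n : ℕ → ℕ) (d : ℕ → ℤ) (α : ℕ → ℝ) (μ : ℝ) : Prop :=
  ∀ t, t ≤ r + 1 → ∑ i ∈ range t, excess n d α μ i i ≤ 0

/-- (C2) at `(a, b)` says `∑_{i ∉ [a, b]} excess i i + ∑_{i ∈ [a, b]} excess b i ≤ 0`; for
a chain of total excess `0` this is the inequality below. -/
def ExcessC2 (r : ℕ) (n : ℕ → ℕ) (d : ℕ → ℤ) (α : ℕ → ℝ) (μ : ℝ) : Prop :=
  ∀ a b, a < b → b ≤ r → (∀ i ∈ Ico a b, n b < n i) →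
    ∑ i ∈ Icc a b, (excess n d α μ b i - excess n d α μ i i) ≤ 0

def ExcessC3 (r : ℕ) (n : ℕ → ℕ) (d : ℕ → ℤ) (α : ℕ → ℝ) (μ : ℝ) : Prop :=
  ∀ a b, a < b → b ≤ r → (∀ i ∈ Ioc a b, n a < n i) →
    ∑ i ∈ Ioc a b, (excess n d α μ i i - excess n d α μ a i) ≤ 0

section Excess

variable {r a b c c' i : ℕ} {n : ℕ → ℕ} {d : ℕ → ℤ} {α : ℕ → ℝ} {μ : ℝ}

theorem excess_eq_zero (hn : n c = 0) (hd : d c = 0) : excess n d α μ c i = 0 := by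
  simp [excess, hn, hd]

theorem excess_sub {m : ℕ → ℕ} {e : ℕ → ℤ} (h : m c ≤ n c) :
    excess (n - m) (d - e) α μ c i = excess n d α μ c i - excess m e α μ c i := by
  simp only [excess, Pi.sub_apply, Nat.cast_sub h, Int.cast_sub]; ring

theorem monotoneOn_excess {s : Set ℕ} (hα : MonotoneOn α s) :
    MonotoneOn (excess n d α μ c) s := fun i hi i' hi' h => by
  have := mul_le_mul_of_nonneg_right (sub_le_sub_right (hα hi hi' h) μ) (n c).cast_nonneg
  simp only [excess]; linarith

theorem monotoneOn_excess_sub_excess {s : Set ℕ} (hα : MonotoneOn α s) (hc : n c' ≤ n c) :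
    MonotoneOn (fun i => excess n d α μ c i - excess n d α μ c' i) s := fun i hi i' hi' h => by
  have hc : (0 : ℝ) ≤ n c - n c' := sub_nonneg.2 (by exact_mod_cast hc)
  have := mul_le_mul_of_nonneg_right (sub_le_sub_right (hα hi hi' h) μ) hc
  simp only [excess]; linarith

theorem sum_excess_diag (s : Finset ℕ) :
    ∑ i ∈ s, excess n d α μ i i =
      ∑ i ∈ s, ((d i : ℝ) + α i * n i) - μ * ∑ i ∈ s, (n i : ℝ) := by
  simp only [excess, mul_sum, ← sum_sub_distrib]
  exact sum_congr rfl fun i _ => by ring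

theorem sum_excess_diag_eq_zero (hconv : ∀ i, i ≤ r → n i = 0 → d i = 0) {s : Finset ℕ}
    (hs : s ⊆ range (r + 1)) (h : ∑ i ∈ s, (n i : ℝ) ≤ 0) :
    ∑ i ∈ s, excess n d α μ i i = 0 :=
  sum_eq_zero fun i hi => by
    have hi0 : n i = 0 := by
      exact_mod_cast (sum_eq_zero_iff_of_nonneg fun i _ => (n i).cast_nonneg).1
        (h.antisymm (sum_nonneg fun i _ => (n i).cast_nonneg)) i hi
    exact excess_eq_zero hi0 (hconv i (by have := hs hi; simp at this; omega) hi0)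

theorem sum_excess_eq_zero_iff (hn : 0 < ∑ i ∈ range (r + 1), n i) :
    ∑ i ∈ range (r + 1), excess n d α μ i i = 0 ↔ mu r n d α = μ := by
  have hD : (0 : ℝ) < ∑ i ∈ range (r + 1), (n i : ℝ) := by exact_mod_cast hn
  rw [sum_excess_diag, mu, div_eq_iff hD.ne', sum_add_distrib, sub_eq_zero]

theorem condC2_numerator_sub_mul_denominator (hab : a ≤ b) (hbr : b ≤ r) :
    ((∑ i ∈ range (r + 1) \ Icc a b, ((d i : ℝ) + α i * n i)) +
        ((b : ℝ) - a + 1) * d b + (∑ i ∈ Icc a b, α i) * n b) -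
      μ * ((∑ i ∈ range (r + 1) \ Icc a b, (n i : ℝ)) + ((b : ℝ) - a + 1) * n b) =
    ∑ i ∈ range (r + 1), excess n d α μ i i +
      ∑ i ∈ Icc a b, (excess n d α μ b i - excess n d α μ i i) := by
  have hsub : Icc a b ⊆ range (r + 1) := fun i hi => by simp at hi ⊢; omega
  have hcard : ((Icc a b).card : ℝ) = (b : ℝ) - a + 1 := by
    rw [Nat.card_Icc, Nat.cast_sub (by omega)]; push_cast; ring
  have hdiag := sum_excess_diag (n := n) (d := d) (α := α) (μ := μ) (range (r + 1) \ Icc a b)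
  rw [sum_sdiff_eq_sub hsub] at hdiag
  simp only [sum_sub_distrib, excess, sum_add_distrib, sum_const, ← sum_mul, hcard,
    nsmul_eq_mul] at hdiag ⊢
  linarith

theorem condC3_numerator_sub_mul_denominator :
    ∑ i ∈ Icc (a + 1) b, ((d i : ℝ) - d a + α i * ((n i : ℝ) - n a)) -
      μ * ∑ i ∈ Icc (a + 1) b, ((n i : ℝ) - n a) =
    ∑ i ∈ Ioc a b, (excess n d α μ i i - excess n d α μ a i) := by
  rw [Icc_add_one_left_eq_Ioc, mul_sum, ← sum_sub_distrib]
  exact sum_congr rfl fun i _ => by simp only [excess]; ring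

theorem condC3_denominator_pos (hab : a < b) (hlt : ∀ i ∈ Ioc a b, n a < n i) :
    0 < ∑ i ∈ Icc (a + 1) b, ((n i : ℝ) - n a) := by
  rw [Icc_add_one_left_eq_Ioc]
  exact sum_pos (fun i hi => sub_pos.2 (by exact_mod_cast hlt i hi)) (nonempty_Ioc.2 hab)

theorem sum_Ioc_excess_eq_zero_of_condC3_eq (hab : a < b) (hlt : ∀ i ∈ Ioc a b, n a < n i)
    (heq : (∑ i ∈ Icc (a + 1) b, ((d i : ℝ) - d a + α i * ((n i : ℝ) - n a))) /
        (∑ i ∈ Icc (a + 1) b, ((n i : ℝ) - n a)) = μ) :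
    ∑ i ∈ Ioc a b, (excess n d α μ i i - excess n d α μ a i) = 0 := by
  rw [div_eq_iff (condC3_denominator_pos hab hlt).ne'] at heq
  rw [← condC3_numerator_sub_mul_denominator, heq, sub_self]

theorem excessC1_of_condC1 (hn : 0 < ∑ i ∈ range (r + 1), n i)
    (hconv : ∀ i, i ≤ r → n i = 0 → d i = 0) (h : CondC1 r n d α) :
    ExcessC1 r n d α (mu r n d α) := by
  intro t ht
  obtain rfl | ht := ht.eq_or_lt
  · exact ((sum_excess_eq_zero_iff hn).2 rfl).le
  cases t with
  | zero => simp
  | succ t =>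
    rcases le_or_gt (∑ i ∈ range (t + 1), (n i : ℝ)) 0 with h0 | hpos
    · exact (sum_excess_diag_eq_zero hconv (range_subset_range.2 ht.le) h0).le
    · have := (div_le_iff₀ hpos).1 (h t (by omega) hpos)
      rw [sum_excess_diag]; linarith

theorem excessC2_of_condC2 (hn : 0 < ∑ i ∈ range (r + 1), n i)
    (hconv : ∀ i, i ≤ r → n i = 0 → d i = 0) (h : CondC2 r n d α) :
    ExcessC2 r n d α (mu r n d α) := by
  intro a b hab hbr hlt
  have htot := (sum_excess_eq_zero_iff (d := d) (α := α) hn).2 rfl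
  have hsplit := condC2_numerator_sub_mul_denominator (n := n) (d := d) (α := α)
    (μ := mu r n d α) hab.le hbr
  set D := (∑ i ∈ range (r + 1) \ Icc a b, (n i : ℝ)) + ((b : ℝ) - a + 1) * n b
  suffices ((∑ i ∈ range (r + 1) \ Icc a b, ((d i : ℝ) + α i * n i)) +
      ((b : ℝ) - a + 1) * d b + (∑ i ∈ Icc a b, α i) * n b) - mu r n d α * D ≤ 0 by
    linarith
  rcases le_or_gt D 0 with hD | hD
  · have hba : (0 : ℝ) < (b : ℝ) - a + 1 := by
      linarith [(by exact_mod_cast hab : (a : ℝ) < b)]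
    have hS := sum_nonneg fun i (_ : i ∈ range (r + 1) \ Icc a b) => (n i).cast_nonneg (α := ℝ)
    have hT : 0 ≤ ((b : ℝ) - a + 1) * n b := by positivity
    have hnb : n b = 0 := by
      exact_mod_cast (nonpos_of_mul_nonpos_right (by linarith) hba).antisymm (n b).cast_nonneg
    have hout := sum_excess_diag_eq_zero (α := α) (μ := mu r n d α) hconv sdiff_subset
      (by linarith : ∑ i ∈ range (r + 1) \ Icc a b, (n i : ℝ) ≤ 0)
    rw [sum_excess_diag] at hout
    simp only [D, hnb, hconv b hbr hnb]
    push_cast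
    linarith
  · exact sub_nonpos.2 ((div_le_iff₀ hD).1
      (h a b hab hbr (fun i hi => hlt i (by simp at hi ⊢; omega)) hD))

theorem excessC3_of_condC3 (h : CondC3 r n d α) : ExcessC3 r n d α (mu r n d α) := by
  intro a b hab hbr hlt
  have := h a b hab hbr (by rwa [Icc_add_one_left_eq_Ioc])
  rw [div_le_iff₀ (condC3_denominator_pos hab hlt)] at this
  rw [← condC3_numerator_sub_mul_denominator]; linarith

theorem mem_stabilityRegion_of_excess {g : ℤ} (hα0 : α 0 = 0)
    (hstep : ∀ i, 1 ≤ i → i ≤ r → α i - α (i - 1) > 2 * (g : ℝ) - 2)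
    (hn : 0 < ∑ i ∈ range (r + 1), n i)
    (htot : ∑ i ∈ range (r + 1), excess n d α μ i i = 0)
    (h1 : ExcessC1 r n d α μ) (h2 : ExcessC2 r n d α μ) (h3 : ExcessC3 r n d α μ) :
    α ∈ StabilityRegion r n d g := by
  have hμ := (sum_excess_eq_zero_iff hn).1 htot
  refine ⟨hα0, hstep, fun t ht hpos => ?_, fun a b hab hbr hlt hpos => ?_,
    fun a b hab hbr hlt => ?_⟩
  · have := h1 (t + 1) (by omega)
    rw [sum_excess_diag] at this
    rw [hμ, div_le_iff₀ hpos]; linarith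
  · have := condC2_numerator_sub_mul_denominator (n := n) (d := d) (α := α) (μ := μ) hab.le hbr
    have := h2 a b hab hbr fun i hi => hlt i (by simp at hi ⊢; omega)
    rw [hμ, div_le_iff₀ hpos]; linarith
  · rw [Icc_add_one_left_eq_Ioc] at hlt
    have := h3 a b hab hbr hlt
    rw [← condC3_numerator_sub_mul_denominator] at this
    rw [hμ, div_le_iff₀ (condC3_denominator_pos hab hlt)]; linarith

end Excess

/-- `(collapseBlock k j n, collapseBlock k j d)` is the standard quotient `(n'', d'')`, and
`(n - collapseBlock k j n, d - collapseBlock k j d)` is `(n', d')`. -/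
def collapseBlock {β : Type*} (k j : ℕ) (f : ℕ → β) (i : ℕ) : β :=
  if k ≤ i ∧ i ≤ j then f k else f i

section Collapse

variable {k j c i : ℕ} {n : ℕ → ℕ} {d : ℕ → ℤ} {α : ℕ → ℝ} {μ : ℝ}

theorem collapseBlock_le (hmin : ∀ i ∈ Ioc k j, n k < n i) (c : ℕ) :
    collapseBlock k j n c ≤ n c := by
  unfold collapseBlock
  split_ifs with hc
  · obtain rfl | hkc := hc.1.eq_or_lt
    · rfl
    · exact (hmin c (mem_Ioc.2 ⟨hkc, hc.2⟩)).le
  · rfl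

theorem collapseBlock_of_mem {β : Type*} {f : ℕ → β} (hc : k ≤ c ∧ c ≤ j) :
    collapseBlock k j f c = f k :=
  if_pos hc

theorem collapseBlock_of_not_mem_Ioc {β : Type*} {f : ℕ → β} (hc : c ∉ Ioc k j) :
    collapseBlock k j f c = f c := by
  unfold collapseBlock
  split_ifs with h
  · rw [show c = k by simp at hc; omega]
  · rfl

theorem excess_collapseBlock_of_mem (hc : k ≤ c ∧ c ≤ j) :
    excess (collapseBlock k j n) (collapseBlock k j d) α μ c i = excess n d α μ k i := by
  simp only [excess, collapseBlock, if_pos hc]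

theorem excess_collapseBlock_of_not_mem_Ioc (hc : c ∉ Ioc k j) :
    excess (collapseBlock k j n) (collapseBlock k j d) α μ c i = excess n d α μ c i := by
  simp only [excess, collapseBlock_of_not_mem_Ioc hc]

theorem excess_sub_collapseBlock_of_mem (hmin : ∀ i ∈ Ioc k j, n k < n i)
    (hc : k ≤ c ∧ c ≤ j) :
    excess (n - collapseBlock k j n) (d - collapseBlock k j d) α μ c i =
      excess n d α μ c i - excess n d α μ k i := by
  rw [excess_sub (collapseBlock_le hmin c), excess_collapseBlock_of_mem hc]

theorem excess_sub_collapseBlock_of_not_mem_Ioc (hc : c ∉ Ioc k j) :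
    excess (n - collapseBlock k j n) (d - collapseBlock k j d) α μ c i = 0 :=
  excess_eq_zero (by simp [collapseBlock_of_not_mem_Ioc hc])
    (by simp [collapseBlock_of_not_mem_Ioc hc])

theorem sub_collapseBlock_of_mem (hc : k ≤ c ∧ c ≤ j) :
    (n - collapseBlock k j n) c = n c - n k := by
  simp [collapseBlock, hc]

theorem sub_collapseBlock_pos_iff (hmin : ∀ i ∈ Ioc k j, n k < n i) :
    0 < (n - collapseBlock k j n) c ↔ c ∈ Ioc k j := by
  by_cases hc : c ∈ Ioc k j
  · rw [sub_collapseBlock_of_mem (by simp at hc; omega)]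
    simpa [hc] using hmin c hc
  · simp [collapseBlock_of_not_mem_Ioc hc, hc]

theorem excess_collapseBlock_diag :
    excess (collapseBlock k j n) (collapseBlock k j d) α μ i i = excess n d α μ i i -
      if i ∈ Ioc k j then excess n d α μ i i - excess n d α μ k i else 0 := by
  by_cases hi : i ∈ Ioc k j
  · rw [excess_collapseBlock_of_mem (by simp at hi; omega), if_pos hi]; ring
  · rw [excess_collapseBlock_of_not_mem_Ioc hi, if_neg hi, sub_zero]

theorem sum_excess_collapseBlock_diag (s : Finset ℕ) :
    ∑ i ∈ s, excess (collapseBlock k j n) (collapseBlock k j d) α μ i i =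
      ∑ i ∈ s, excess n d α μ i i -
        ∑ i ∈ s ∩ Ioc k j, (excess n d α μ i i - excess n d α μ k i) := by
  simp only [excess_collapseBlock_diag, sum_sub_distrib, sum_ite_mem]

theorem sum_excess_sub_collapseBlock_diag (hmin : ∀ i ∈ Ioc k j, n k < n i) (s : Finset ℕ) :
    ∑ i ∈ s, excess (n - collapseBlock k j n) (d - collapseBlock k j d) α μ i i =
      ∑ i ∈ s ∩ Ioc k j, (excess n d α μ i i - excess n d α μ k i) := by
  simp only [excess_sub (collapseBlock_le hmin _), excess_collapseBlock_diag, sub_sub_cancel,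
    sum_ite_mem]

theorem sum_excess_collapseBlock_diag_of_wall
    (hwall : ∑ i ∈ Ioc k j, (excess n d α μ i i - excess n d α μ k i) = 0)
    {s : Finset ℕ} (hs : Disjoint s (Ioc k j) ∨ Ioc k j ⊆ s) :
    ∑ i ∈ s, excess (collapseBlock k j n) (collapseBlock k j d) α μ i i =
      ∑ i ∈ s, excess n d α μ i i := by
  rw [sum_excess_collapseBlock_diag]
  rcases hs with hs | hs
  · rw [disjoint_iff_inter_eq_empty.1 hs, sum_empty, sub_zero]
  · rw [inter_eq_right.2 hs, hwall, sub_zero]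

end Collapse

section SubChain

variable {r k j : ℕ} {n : ℕ → ℕ} {d : ℕ → ℤ} {α : ℕ → ℝ} {μ : ℝ}

theorem condC0_sub_collapseBlock (hmin : ∀ i ∈ Ioc k j, n k < n i) (hC0 : CondC0 r n d) :
    CondC0 r (n - collapseBlock k j n) (d - collapseBlock k j d) := by
  intro i h1 hir heq
  have hmin' : ∀ i, k < i → i ≤ j → n k < n i := fun i h h' =>
    hmin i (mem_Ioc.2 ⟨h, h'⟩)
  simp only [Pi.sub_apply, collapseBlock] at heq ⊢
  split_ifs at heq ⊢ with hi hi'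
  · have := hmin' i (by omega) hi.2
    have := hC0 i h1 hir
    obtain rfl | hk := hi'.1.eq_or_lt
    · omega
    · have := hmin' (i - 1) hk hi'.2; omega
  · obtain rfl : i = k := by omega
    simp
  · obtain hk | hk := (show k ≤ i - 1 by omega).eq_or_lt
    · simp [hk]
    · have := hmin' (i - 1) hk (by omega); omega
  · simp

theorem sum_Ioc_excess_sub_nonpos (hjr : j ≤ r) (hmin : ∀ i ∈ Ioc k j, n k < n i)
    (hC3 : ExcessC3 r n d α μ) {m : ℕ} (hm : m ≤ j) :
    ∑ i ∈ Ioc k m, (excess n d α μ i i - excess n d α μ k i) ≤ 0 := by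
  rcases le_or_gt m k with hmk | hkm
  · simp [Ioc_eq_empty_of_le hmk]
  · exact hC3 k m hkm (hm.trans hjr) fun i hi => hmin i (Ioc_subset_Ioc_right hm hi)

theorem sum_sub_collapseBlock_pos (hkj : k < j) (hjr : j ≤ r)
    (hmin : ∀ i ∈ Ioc k j, n k < n i) :
    0 < ∑ i ∈ range (r + 1), (n - collapseBlock k j n) i :=
  sum_pos' (fun _ _ => Nat.zero_le _)
    ⟨j, by simp; omega, (sub_collapseBlock_pos_iff hmin).2 (by simp [hkj])⟩

theorem sum_excess_sub_collapseBlock (hjr : j ≤ r) (hmin : ∀ i ∈ Ioc k j, n k < n i)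
    (hwall : ∑ i ∈ Ioc k j, (excess n d α μ i i - excess n d α μ k i) = 0) :
    ∑ i ∈ range (r + 1),
      excess (n - collapseBlock k j n) (d - collapseBlock k j d) α μ i i = 0 := by
  rw [sum_excess_sub_collapseBlock_diag hmin,
    inter_eq_right.2 fun i hi => by simp at hi ⊢; omega, hwall]

theorem excessC1_sub_collapseBlock (hjr : j ≤ r) (hmin : ∀ i ∈ Ioc k j, n k < n i)
    (hwall : ∑ i ∈ Ioc k j, (excess n d α μ i i - excess n d α μ k i) = 0)
    (hC3 : ExcessC3 r n d α μ) :
    ExcessC1 r (n - collapseBlock k j n) (d - collapseBlock k j d) α μ := by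
  intro t _
  rw [sum_excess_sub_collapseBlock_diag hmin]
  rcases le_or_gt j (t - 1) with h | h
  · rw [inter_eq_right.2 fun i hi => by simp at hi ⊢; omega, hwall]
  · rw [show range t ∩ Ioc k j = Ioc k (t - 1) by ext; simp; omega]
    exact sum_Ioc_excess_sub_nonpos hjr hmin hC3 h.le

theorem excessC2_sub_collapseBlock (hjr : j ≤ r) (hmin : ∀ i ∈ Ioc k j, n k < n i)
    (hwall : ∑ i ∈ Ioc k j, (excess n d α μ i i - excess n d α μ k i) = 0)
    (hC2 : ExcessC2 r n d α μ) (hC3 : ExcessC3 r n d α μ) :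
    ExcessC2 r (n - collapseBlock k j n) (d - collapseBlock k j d) α μ := by
  intro a b hab hbr hlt
  have hpos : ∀ i ∈ Ico a b, i ∈ Ioc k j := fun i hi =>
    (sub_collapseBlock_pos_iff hmin).1 ((Nat.zero_le _).trans_lt (hlt i hi))
  have ha := hpos a (by simp [hab])
  simp only [mem_Ioc] at ha
  by_cases hb : b ∈ Ioc k j
  · simp only [mem_Ioc] at hb
    rw [sum_congr rfl fun i hi => by
      rw [excess_sub_collapseBlock_of_mem hmin (by omega),
        excess_sub_collapseBlock_of_mem hmin (by simp at hi; omega)]]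
    refine (sum_congr rfl fun i _ => by ring).trans_le (hC2 a b hab hbr fun i hi => ?_)
    have hi' := hlt i hi
    have hin := mem_Ioc.1 (hpos i hi)
    rw [sub_collapseBlock_of_mem (by omega), sub_collapseBlock_of_mem (by omega)] at hi'
    have := hmin b (mem_Ioc.2 hb)
    omega
  · obtain rfl : b = j + 1 := by
      have := hpos (b - 1) (by simp; omega)
      simp at this hb; omega
    simp only [excess_sub_collapseBlock_of_not_mem_Ioc hb, zero_sub, sum_neg_distrib,
      sum_excess_sub_collapseBlock_diag hmin]
    rw [show Icc a (j + 1) ∩ Ioc k j = Ioc (a - 1) j by ext; simp; omega]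
    have := sum_Ioc_consecutive (fun i => excess n d α μ i i - excess n d α μ k i)
      (show k ≤ a - 1 by omega) (show a - 1 ≤ j by omega)
    have := sum_Ioc_excess_sub_nonpos hjr hmin hC3 (show a - 1 ≤ j by omega)
    linarith

theorem excessC3_sub_collapseBlock (hmin : ∀ i ∈ Ioc k j, n k < n i)
    (hC3 : ExcessC3 r n d α μ) :
    ExcessC3 r (n - collapseBlock k j n) (d - collapseBlock k j d) α μ := by
  intro a b hab hbr hlt
  have hpos : ∀ i ∈ Ioc a b, k < i ∧ i ≤ j := fun i hi => mem_Ioc.1 <|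
    (sub_collapseBlock_pos_iff hmin).1 ((Nat.zero_le _).trans_lt (hlt i hi))
  have ha : k ≤ a ∧ a ≤ j := by
    have := hpos (a + 1) (by simp; omega); have := hpos b (by simp; omega); omega
  rw [sum_congr rfl fun i hi => by
    rw [excess_sub_collapseBlock_of_mem hmin (by have := hpos i hi; omega),
      excess_sub_collapseBlock_of_mem hmin ha]]
  refine (sum_congr rfl fun i _ => by ring).trans_le (hC3 a b hab hbr fun i hi => ?_)
  have hi' := hlt i hi
  have hka : n k ≤ n a := by simpa [collapseBlock, ha] using collapseBlock_le hmin a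
  rw [sub_collapseBlock_of_mem ha, sub_collapseBlock_of_mem (by have := hpos i hi; omega)] at hi'
  omega

end SubChain

section Quotient

variable {r k j : ℕ} {n : ℕ → ℕ} {d : ℕ → ℤ} {α : ℕ → ℝ} {μ : ℝ}

theorem d_succ_le_of_n_succ_eq (hkj : k < j) (hmin : ∀ i ∈ Ioc k j, n k < n i)
    (hwall : ∑ i ∈ Ioc k j, (excess n d α μ i i - excess n d α μ k i) = 0)
    (hC2 : ExcessC2 r n d α μ) (hjr : j + 1 ≤ r) (heq : n (j + 1) = n k) :
    d (j + 1) ≤ d k := by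
  have h := hC2 (k + 1) (j + 1) (by omega) hjr fun i hi => heq ▸ hmin i (by simp at hi ⊢; omega)
  rw [Icc_add_one_left_eq_Ioc, sum_Ioc_succ_top (by omega),
    sub_self, add_zero] at h
  have hsum : ∑ i ∈ Ioc k j, (excess n d α μ (j + 1) i - excess n d α μ i i) =
      ∑ i ∈ Ioc k j, ((d (j + 1) : ℝ) - d k -
        (excess n d α μ i i - excess n d α μ k i)) :=
    sum_congr rfl fun i _ => by simp only [excess, heq]; ring
  rw [hsum, sum_sub_distrib, hwall, sum_const, Nat.card_Ioc, nsmul_eq_mul, sub_zero] at h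
  have hjk : (0 : ℝ) < ((j - k : ℕ) : ℝ) := by exact_mod_cast Nat.sub_pos_of_lt hkj
  have : (d (j + 1) : ℝ) ≤ d k := by nlinarith
  exact_mod_cast this

theorem condC0_collapseBlock (hkj : k < j) (hmin : ∀ i ∈ Ioc k j, n k < n i)
    (hwall : ∑ i ∈ Ioc k j, (excess n d α μ i i - excess n d α μ k i) = 0)
    (hC0 : CondC0 r n d) (hC2 : ExcessC2 r n d α μ) :
    CondC0 r (collapseBlock k j n) (collapseBlock k j d) := by
  intro i h1 hir heq
  simp only [collapseBlock] at heq ⊢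
  split_ifs at heq ⊢ with hi hi'
  · exact le_rfl
  · obtain rfl : i = k := by omega
    exact hC0 i h1 hir heq
  · obtain rfl : i = j + 1 := by omega
    exact d_succ_le_of_n_succ_eq hkj hmin hwall hC2 hir heq
  · exact hC0 i h1 hir heq

theorem sum_excess_collapseBlock (hjr : j ≤ r)
    (hwall : ∑ i ∈ Ioc k j, (excess n d α μ i i - excess n d α μ k i) = 0)
    (htot : ∑ i ∈ range (r + 1), excess n d α μ i i = 0) :
    ∑ i ∈ range (r + 1), excess (collapseBlock k j n) (collapseBlock k j d) α μ i i = 0 := by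
  rw [sum_excess_collapseBlock_diag_of_wall hwall (Or.inr fun i hi => by simp at hi ⊢; omega),
    htot]

theorem excessC1_collapseBlock (hjr : j ≤ r)
    (hwall : ∑ i ∈ Ioc k j, (excess n d α μ i i - excess n d α μ k i) = 0)
    (hα : MonotoneOn α (Set.Iic r)) (hC1 : ExcessC1 r n d α μ) :
    ExcessC1 r (collapseBlock k j n) (collapseBlock k j d) α μ := by
  have hfar : ∀ t, t ≤ r + 1 → (t ≤ k ∨ j + 1 ≤ t) →
      ∑ i ∈ range t, excess (collapseBlock k j n) (collapseBlock k j d) α μ i i ≤ 0 := by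
    intro t ht htkj
    rw [sum_excess_collapseBlock_diag_of_wall hwall (htkj.imp
      (fun h => disjoint_left.2 fun i hi hi' => by simp at hi hi'; omega)
      (fun h i hi => by simp at hi ⊢; omega))]
    exact hC1 t ht
  have hnear : ∀ t, k ≤ t → t ≤ j + 1 →
      ∑ i ∈ range t, excess (collapseBlock k j n) (collapseBlock k j d) α μ i i =
        ∑ i ∈ range k, excess n d α μ i i + ∑ i ∈ Ico k t, excess n d α μ k i := by
    intro t hkt htj
    rw [← sum_range_add_sum_Ico _ hkt]
    congr 1
    · exact sum_congr rfl fun i hi =>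
        excess_collapseBlock_of_not_mem_Ioc (by simp at hi ⊢; omega)
    · exact sum_congr rfl fun i hi => excess_collapseBlock_of_mem (by simp at hi; omega)
  intro t ht
  rcases le_or_gt t k with htk | hkt
  · exact hfar t ht (Or.inl htk)
  rcases le_or_gt (j + 1) t with hjt | htj
  · exact hfar t ht (Or.inr hjt)
  rw [hnear t hkt.le htj.le]
  refine add_sum_Ico_nonpos_of_monotoneOn ((monotoneOn_excess hα).mono fun i hi => ?_) hkt.le
    htj.le (hC1 k (by omega)) ?_
  · simp only [Set.mem_Ico, Set.mem_Iic] at hi ⊢; omega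
  · rw [← hnear (j + 1) (by omega) le_rfl]
    exact hfar (j + 1) (by omega) (Or.inr le_rfl)

theorem sum_excess_collapseBlock_C2_of_not_mem (hkj : k < j) (hmin : ∀ i ∈ Ioc k j, n k < n i)
    (hwall : ∑ i ∈ Ioc k j, (excess n d α μ i i - excess n d α μ k i) = 0)
    (hC2 : ExcessC2 r n d α μ) {a b : ℕ} (hab : a < b) (hbr : b ≤ r) (hjb : j < b)
    (ha : a ∉ Ioc k j) (hlt : ∀ i ∈ Ico a b, collapseBlock k j n b < collapseBlock k j n i) :
    ∑ i ∈ Icc a b, (excess (collapseBlock k j n) (collapseBlock k j d) α μ b i -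
      excess (collapseBlock k j n) (collapseBlock k j d) α μ i i) ≤ 0 := by
  have hb : b ∉ Ioc k j := by simp; omega
  have hs : Disjoint (Icc a b) (Ioc k j) ∨ Ioc k j ⊆ Icc a b := by
    rcases (show j < a ∨ a ≤ k by simp at ha; omega) with hja | hak
    · exact Or.inl (disjoint_left.2 fun i hi hi' => by simp at hi hi'; omega)
    · exact Or.inr fun i hi => by simp at hi ⊢; omega
  rw [sum_sub_distrib, sum_excess_collapseBlock_diag_of_wall hwall hs, ← sum_sub_distrib]
  simp only [excess_collapseBlock_of_not_mem_Ioc hb]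
  refine hC2 a b hab hbr fun i hi => ?_
  rw [← collapseBlock_of_not_mem_Ioc hb (f := n)]
  by_cases hi' : i ∈ Ioc k j
  · have hk := hlt k (by simp at ha hi hi' ⊢; omega)
    rw [collapseBlock_of_mem ⟨le_rfl, hkj.le⟩] at hk
    exact hk.trans (hmin i hi')
  · simpa [collapseBlock_of_not_mem_Ioc hi'] using hlt i hi

theorem sum_excess_collapseBlock_C2_of_mem (hkj : k < j) (hmin : ∀ i ∈ Ioc k j, n k < n i)
    (hwall : ∑ i ∈ Ioc k j, (excess n d α μ i i - excess n d α μ k i) = 0)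
    (hα : MonotoneOn α (Set.Iic r)) (hC2 : ExcessC2 r n d α μ) {a b : ℕ} (hbr : b ≤ r)
    (hjb : j < b) (ha : k < a ∧ a ≤ j)
    (hlt : ∀ i ∈ Ico a b, collapseBlock k j n b < collapseBlock k j n i) :
    ∑ i ∈ Icc a b, (excess (collapseBlock k j n) (collapseBlock k j d) α μ b i -
      excess (collapseBlock k j n) (collapseBlock k j d) α μ i i) ≤ 0 := by
  set F := fun i => excess (collapseBlock k j n) (collapseBlock k j d) α μ b i -
    excess (collapseBlock k j n) (collapseBlock k j d) α μ i i
  have hb : b ∉ Ioc k j := by simp; omega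
  have hbk : n b < n k := by
    simpa [collapseBlock_of_not_mem_Ioc hb, collapseBlock_of_mem (by omega : k ≤ a ∧ a ≤ j)]
      using hlt a (by simp; omega)
  -- on `[k, t)` the summand is `excess k - excess b`, monotone in `i` because `n b < n k`
  have hF : ∀ t, k ≤ t → t ≤ j + 1 → ∑ i ∈ Icc t b, F i =
      ∑ i ∈ Icc k b, F i +
        ∑ i ∈ Ico k t, (excess n d α μ k i - excess n d α μ b i) := by
    intro t hkt htj
    have hblock : ∑ i ∈ Ico k t, F i =
        -∑ i ∈ Ico k t, (excess n d α μ k i - excess n d α μ b i) := by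
      rw [← sum_neg_distrib]
      refine sum_congr rfl fun i hi => ?_
      simp only [F, excess_collapseBlock_of_not_mem_Ioc hb,
        excess_collapseBlock_of_mem (by simp at hi; omega : k ≤ i ∧ i ≤ j)]
      ring
    have := sum_Ico_consecutive F hkt (by omega : t ≤ b + 1)
    rw [← Ico_add_one_right_eq_Icc, ← Ico_add_one_right_eq_Icc]
    linarith
  rw [hF a ha.1.le (by omega)]
  refine add_sum_Ico_nonpos_of_monotoneOn
    ((monotoneOn_excess_sub_excess hα hbk.le).mono fun i hi => ?_) ha.1.le
    (show a ≤ j + 1 by omega)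
    (sum_excess_collapseBlock_C2_of_not_mem (a := k) hkj hmin hwall hC2 (by omega) hbr hjb
      (by simp) fun i hi => ?_) ?_
  · simp only [Set.mem_Ico, Set.mem_Iic] at hi ⊢; omega
  · by_cases hi' : i ≤ j
    · rw [collapseBlock_of_mem (c := i) (by simp at hi; omega),
        ← collapseBlock_of_mem (f := n) ⟨ha.1.le, ha.2⟩]
      exact hlt a (by simp; omega)
    · exact hlt i (by simp at hi ⊢; omega)
  · rw [← hF (j + 1) (by omega) le_rfl]
    obtain rfl | hjb := (show j + 1 ≤ b from hjb).eq_or_lt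
    · simp [F]
    · exact sum_excess_collapseBlock_C2_of_not_mem hkj hmin hwall hC2 hjb hbr (by omega)
        (by simp) fun i hi => hlt i (by simp at hi ⊢; omega)

theorem excessC2_collapseBlock (hkj : k < j) (hmin : ∀ i ∈ Ioc k j, n k < n i)
    (hwall : ∑ i ∈ Ioc k j, (excess n d α μ i i - excess n d α μ k i) = 0)
    (hα : MonotoneOn α (Set.Iic r)) (hC2 : ExcessC2 r n d α μ) :
    ExcessC2 r (collapseBlock k j n) (collapseBlock k j d) α μ := by
  intro a b hab hbr hlt
  rcases le_or_gt b k with hbk | hkb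
  · rw [sum_congr rfl fun i hi => by
      rw [excess_collapseBlock_of_not_mem_Ioc (by simp; omega),
        excess_collapseBlock_of_not_mem_Ioc (by simp at hi ⊢; omega)]]
    refine hC2 a b hab hbr fun i hi => ?_
    simpa [collapseBlock_of_not_mem_Ioc (show b ∉ Ioc k j by simp; omega),
      collapseBlock_of_not_mem_Ioc (show i ∉ Ioc k j by simp at hi ⊢; omega)] using hlt i hi
  rcases le_or_gt b j with hbj | hjb
  · -- `collapseBlock k j n` is constant on `[k, b]`, so `max a k` violates `hlt`
    have := hlt (max a k) (by simp; omega)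
    rw [collapseBlock_of_mem (by omega : k ≤ b ∧ b ≤ j), collapseBlock_of_mem (by omega)]
      at this
    exact absurd this (lt_irrefl _)
  by_cases ha : k < a ∧ a ≤ j
  · exact sum_excess_collapseBlock_C2_of_mem hkj hmin hwall hα hC2 hbr hjb ha hlt
  · exact sum_excess_collapseBlock_C2_of_not_mem hkj hmin hwall hC2 hab hbr hjb
      (by simp; omega) hlt

theorem sum_excess_collapseBlock_C3_of_not_mem (hkj : k < j) (hmin : ∀ i ∈ Ioc k j, n k < n i)
    (hwall : ∑ i ∈ Ioc k j, (excess n d α μ i i - excess n d α μ k i) = 0)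
    (hC3 : ExcessC3 r n d α μ) {a b : ℕ} (hab : a < b) (hbr : b ≤ r) (ha : a ∉ Ioc k j)
    (hs : Disjoint (Ioc a b) (Ioc k j) ∨ Ioc k j ⊆ Ioc a b)
    (hlt : ∀ i ∈ Ioc a b, collapseBlock k j n a < collapseBlock k j n i) :
    ∑ i ∈ Ioc a b, (excess (collapseBlock k j n) (collapseBlock k j d) α μ i i -
      excess (collapseBlock k j n) (collapseBlock k j d) α μ a i) ≤ 0 := by
  rw [sum_sub_distrib, sum_excess_collapseBlock_diag_of_wall hwall hs, ← sum_sub_distrib]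
  simp only [excess_collapseBlock_of_not_mem_Ioc ha]
  refine hC3 a b hab hbr fun i hi => ?_
  rw [← collapseBlock_of_not_mem_Ioc ha (f := n)]
  by_cases hi' : i ∈ Ioc k j
  · have hak : a ≤ k := by
      have := hs.resolve_left (not_disjoint_iff.2 ⟨i, hi, hi'⟩)
        (by simp; omega : k + 1 ∈ Ioc k j)
      simp at this; omega
    refine lt_of_le_of_lt ?_ (hmin i hi')
    obtain rfl | hak := hak.eq_or_lt
    · exact le_of_eq (collapseBlock_of_mem ⟨le_rfl, hkj.le⟩)
    · have := hlt k (by simp at hi hi' ⊢; omega)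
      rw [collapseBlock_of_mem ⟨le_rfl, hkj.le⟩] at this
      exact this.le
  · simpa [collapseBlock_of_not_mem_Ioc hi'] using hlt i hi

theorem sum_excess_collapseBlock_C3_of_mem (hkj : k < j) (hjr : j ≤ r)
    (hmin : ∀ i ∈ Ioc k j, n k < n i)
    (hwall : ∑ i ∈ Ioc k j, (excess n d α μ i i - excess n d α μ k i) = 0)
    (hα : MonotoneOn α (Set.Iic r)) (hC3 : ExcessC3 r n d α μ) {a b : ℕ}
    (hak : a < k) (hb : k ≤ b ∧ b ≤ j)
    (hlt : ∀ i ∈ Ioc a b, collapseBlock k j n a < collapseBlock k j n i) :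
    ∑ i ∈ Ioc a b, (excess (collapseBlock k j n) (collapseBlock k j d) α μ i i -
      excess (collapseBlock k j n) (collapseBlock k j d) α μ a i) ≤ 0 := by
  set F := fun i => excess (collapseBlock k j n) (collapseBlock k j d) α μ i i -
    excess (collapseBlock k j n) (collapseBlock k j d) α μ a i
  have ha : a ∉ Ioc k j := by simp; omega
  have hak' : n a < n k := by
    simpa [collapseBlock_of_not_mem_Ioc ha, collapseBlock_of_mem ⟨le_rfl, hkj.le⟩]
      using hlt k (by simp; omega)
  have hlt' : ∀ i ∈ Ioc a j, collapseBlock k j n a < collapseBlock k j n i := fun i hi => by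
    by_cases hik : i ≤ k
    · exact hlt i (by simp at hi ⊢; omega)
    · rw [collapseBlock_of_mem (c := i) (by simp at hi; omega), ← collapseBlock_of_mem (c := k)
        (f := n) ⟨le_rfl, hkj.le⟩]
      exact hlt k (by simp; omega)
  -- on `[k, t)` the summand is `excess k - excess a`, monotone in `i` because `n a < n k`
  have hF : ∀ t, k ≤ t → t ≤ j + 1 → ∑ i ∈ Ico (a + 1) t, F i =
      ∑ i ∈ Ico (a + 1) k, F i +
        ∑ i ∈ Ico k t, (excess n d α μ k i - excess n d α μ a i) := by
    intro t hkt htj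
    rw [← sum_Ico_consecutive F (by omega : a + 1 ≤ k) hkt]
    congr 1
    refine sum_congr rfl fun i hi => ?_
    simp only [F, excess_collapseBlock_of_not_mem_Ioc ha,
      excess_collapseBlock_of_mem (by simp at hi; omega : k ≤ i ∧ i ≤ j)]
  rw [← Ico_add_one_add_one_eq_Ioc, hF (b + 1) (by omega) (by omega)]
  refine add_sum_Ico_nonpos_of_monotoneOn
    ((monotoneOn_excess_sub_excess hα hak'.le).mono fun i hi => ?_) (by omega)
    (show b + 1 ≤ j + 1 by omega) ?_ ?_
  · simp only [Set.mem_Ico, Set.mem_Iic] at hi ⊢; omega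
  · obtain hak | hak := (show a + 1 ≤ k from hak).eq_or_lt
    · simp [hak]
    · rw [show Ico (a + 1) k = Ioc a (k - 1) by ext; simp; omega]
      exact sum_excess_collapseBlock_C3_of_not_mem hkj hmin hwall hC3 (by omega) (by omega) ha
        (Or.inl (disjoint_left.2 fun i hi hi' => by simp at hi hi'; omega))
        fun i hi => hlt i (by simp at hi ⊢; omega)
  · rw [← hF (j + 1) (by omega) le_rfl, Ico_add_one_add_one_eq_Ioc]
    exact sum_excess_collapseBlock_C3_of_not_mem hkj hmin hwall hC3 (by omega) hjr ha
      (Or.inr fun i hi => by simp at hi ⊢; omega) hlt'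

theorem excessC3_collapseBlock (hkj : k < j) (hjr : j ≤ r) (hmin : ∀ i ∈ Ioc k j, n k < n i)
    (hwall : ∑ i ∈ Ioc k j, (excess n d α μ i i - excess n d α μ k i) = 0)
    (hα : MonotoneOn α (Set.Iic r)) (hC3 : ExcessC3 r n d α μ) :
    ExcessC3 r (collapseBlock k j n) (collapseBlock k j d) α μ := by
  intro a b hab hbr hlt
  by_cases ha : k ≤ a ∧ a ≤ j
  · -- `collapseBlock k j n` is constant on `[k, j]`, so `hlt` forces `a = j`
    obtain rfl : a = j := by
      by_contra hne
      have := hlt (a + 1) (by simp; omega)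
      rw [collapseBlock_of_mem ha, collapseBlock_of_mem (by omega)] at this
      exact lt_irrefl _ this
    rw [sum_congr rfl fun i hi => by
      rw [excess_collapseBlock_of_not_mem_Ioc (by simp at hi ⊢; omega),
        excess_collapseBlock_of_mem ha]]
    have := sum_Ioc_consecutive (fun i => excess n d α μ i i - excess n d α μ k i) hkj.le hab.le
    have := hC3 k b (hkj.trans hab) hbr fun i hi => by
      by_cases hij : i ≤ a
      · exact hmin i (by simp at hi ⊢; omega)
      · simpa [collapseBlock_of_mem ha,
          collapseBlock_of_not_mem_Ioc (show i ∉ Ioc k a by simp; omega)]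
          using hlt i (by simp at hi ⊢; omega)
    linarith
  have ha' : a ∉ Ioc k j := by simp; omega
  rcases (show a < k ∨ j < a by omega) with hak | hja
  · by_cases hb : k ≤ b ∧ b ≤ j
    · exact sum_excess_collapseBlock_C3_of_mem hkj hjr hmin hwall hα hC3 hak hb hlt
    · refine sum_excess_collapseBlock_C3_of_not_mem hkj hmin hwall hC3 hab hbr ha' ?_ hlt
      rcases (show b < k ∨ j < b by omega) with hbk | hjb
      · exact Or.inl (disjoint_left.2 fun i hi hi' => by simp at hi hi'; omega)
      · exact Or.inr fun i hi => by simp at hi ⊢; omega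
  · exact sum_excess_collapseBlock_C3_of_not_mem hkj hmin hwall hC3 hab hbr ha'
      (Or.inl (disjoint_left.2 fun i hi hi' => by simp at hi hi'; omega)) hlt

end Quotient

/-- Wall-crossing lemma, wall of type (C3): if `α ∈ Stability_n^d(g)` lies on a wall
given by equality in (C3) at `(k, j)`, then the standard-quotient invariants
`(n'', d'')` and the complementary invariants `(n', d') = (n - n'', d - d'')` each
satisfy (C0), and `α` lies in their stability regions. -/
theorem wall_crossing_C3 (r : ℕ) (n : ℕ → ℕ) (d : ℕ → ℤ) (α : ℕ → ℝ) (g : ℤ)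
    (hg : 1 ≤ g)
    (hn : 0 < ∑ i ∈ range (r + 1), n i)
    (hC0 : CondC0 r n d)
    (hconv : ∀ i, i ≤ r → n i = 0 → d i = 0)
    (hα : α ∈ StabilityRegion r n d g)
    (k j : ℕ) (hkj : k < j) (hjr : j ≤ r)
    (hmin : ∀ i ∈ Icc (k + 1) j, n k < n i)
    (heq : (∑ i ∈ Icc (k + 1) j, ((d i : ℝ) - d k + α i * ((n i : ℝ) - n k))) /
        (∑ i ∈ Icc (k + 1) j, ((n i : ℝ) - n k)) = mu r n d α)
    (hn'' : 0 < ∑ i ∈ range (r + 1), (if k ≤ i ∧ i ≤ j then n k else n i)) :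
    CondC0 r (fun i => n i - (if k ≤ i ∧ i ≤ j then n k else n i))
        (fun i => d i - (if k ≤ i ∧ i ≤ j then d k else d i)) ∧
    CondC0 r (fun i => if k ≤ i ∧ i ≤ j then n k else n i)
        (fun i => if k ≤ i ∧ i ≤ j then d k else d i) ∧
    α ∈ StabilityRegion r (fun i => n i - (if k ≤ i ∧ i ≤ j then n k else n i))
        (fun i => d i - (if k ≤ i ∧ i ≤ j then d k else d i)) g ∧
    α ∈ StabilityRegion r (fun i => if k ≤ i ∧ i ≤ j then n k else n i)
        (fun i => if k ≤ i ∧ i ≤ j then d k else d i) g := by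
  obtain ⟨hα0, hstep, hc1, hc2, hc3⟩ := hα
  rw [Icc_add_one_left_eq_Ioc] at hmin
  have hmono := monotoneOn_Iic_of_sub_gt hg hstep
  have hwall := sum_Ioc_excess_eq_zero_of_condC3_eq hkj hmin heq
  have htot := (sum_excess_eq_zero_iff (d := d) (α := α) hn).2 rfl
  have hC1 := excessC1_of_condC1 hn hconv hc1
  have hC2 := excessC2_of_condC2 hn hconv hc2
  have hC3 := excessC3_of_condC3 hc3
  exact ⟨condC0_sub_collapseBlock hmin hC0, condC0_collapseBlock hkj hmin hwall hC0 hC2,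
    mem_stabilityRegion_of_excess hα0 hstep (sum_sub_collapseBlock_pos hkj hjr hmin)
      (sum_excess_sub_collapseBlock hjr hmin hwall) (excessC1_sub_collapseBlock hjr hmin hwall hC3)
      (excessC2_sub_collapseBlock hjr hmin hwall hC2 hC3) (excessC3_sub_collapseBlock hmin hC3),
    mem_stabilityRegion_of_excess hα0 hstep hn'' (sum_excess_collapseBlock hjr hwall htot)
      (excessC1_collapseBlock hjr hwall hmono hC1) (excessC2_collapseBlock hkj hmin hwall hmono hC2)
      (excessC3_collapseBlock hkj hjr hmin hwall hmono hC3)⟩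
end

section
/- (Stability interval for triples.) Let n_0, n_1 ≥ 1 be natural numbers with n_0 ≠ n_1, d_0, d_1 ∈ ℤ, and α ∈ ℝ. Set α_min := d_0/n_0 − d_1/n_1 and α_max := (1 + (n_0 + n_1)/|n_0 − n_1|)·(d_0/n_0 − d_1/n_1). Then the following are equivalent: (i) d_0/n_0 ≤ μ_α(n, d) and, if n_1 < n_0, (2·d_1 + α·n_1)/(2·n_1) ≤ μ_α(n, d), while if n_0 < n_1, (d_1 − d_0 + α·(n_1 − n_0))/(n_1 − n_0) ≤ μ_α(n, d); (ii) α_min ≤ α ≤ α_max. Moreover, if n_0 = n_1 then condition (i) reduces to d_0/n_0 ≤ μ_α(n, d), which holds if and only if α ≥ α_min. -/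
/-!
With `δ = d₀/n₀ − d₁/n₁ = α_min`, each condition says that `μ_α` minus a quantity affine in `α`
is nonnegative, and that difference is a positive multiple of an affine function of `α` vanishing
at an endpoint: `μ_α − d₀/n₀ = n₁/(n₀+n₁) · (α − δ)`, while for (C2) resp. (C3) the difference is
`(n₀−n₁)/(2(n₀+n₁))` resp. `n₀/(n₀+n₁)` times `α_max − α`.
-/

section TripleSlope

variable {K : Type*} [Field K] [LinearOrder K] [IsStrictOrderedRing K] {a b d₀ d₁ α : K}

theorem tripleSlope_sub_left (ha : 0 < a) (hb : 0 < b) :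
    (d₀ + d₁ + α * b) / (a + b) - d₀ / a = b / (a + b) * (α - (d₀ / a - d₁ / b)) := by
  field_simp
  ring

theorem tripleSlope_sub_C2 (hb : 0 < b) (hba : b < a) :
    (d₀ + d₁ + α * b) / (a + b) - (2 * d₁ + α * b) / (2 * b) =
      (a - b) / (2 * (a + b)) * ((1 + (a + b) / (a - b)) * (d₀ / a - d₁ / b) - α) := by
  have : a - b ≠ 0 := (sub_pos.2 hba).ne'
  have : a ≠ 0 := (hb.trans hba).ne'
  have : a + b ≠ 0 := by linarith
  field_simp
  ring

theorem tripleSlope_sub_C3 (ha : 0 < a) (hab : a < b) :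
    (d₀ + d₁ + α * b) / (a + b) - (d₁ - d₀ + α * (b - a)) / (b - a) =
      a / (a + b) * ((1 + (a + b) / (b - a)) * (d₀ / a - d₁ / b) - α) := by
  have : b - a ≠ 0 := (sub_pos.2 hab).ne'
  have : b ≠ 0 := (ha.trans hab).ne'
  have : a + b ≠ 0 := by linarith
  field_simp
  ring

theorem le_iff_of_sub_eq_pos_mul {x y c z : K} (hc : 0 < c) (h : y - x = c * z) :
    x ≤ y ↔ 0 ≤ z := by
  rw [← sub_nonneg, h, mul_nonneg_iff_of_pos_left hc]

theorem tripleC1_iff (ha : 0 < a) (hb : 0 < b) :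
    d₀ / a ≤ (d₀ + d₁ + α * b) / (a + b) ↔ d₀ / a - d₁ / b ≤ α := by
  rw [le_iff_of_sub_eq_pos_mul (by positivity) (tripleSlope_sub_left ha hb), sub_nonneg]

theorem tripleC2_iff (hb : 0 < b) (hba : b < a) :
    (2 * d₁ + α * b) / (2 * b) ≤ (d₀ + d₁ + α * b) / (a + b) ↔
      α ≤ (1 + (a + b) / |a - b|) * (d₀ / a - d₁ / b) := by
  have hpos : 0 < (a - b) / (2 * (a + b)) := div_pos (sub_pos.2 hba) (by linarith)
  rw [le_iff_of_sub_eq_pos_mul hpos (tripleSlope_sub_C2 hb hba), sub_nonneg,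
    abs_of_pos (sub_pos.2 hba)]

theorem tripleC3_iff (ha : 0 < a) (hab : a < b) :
    (d₁ - d₀ + α * (b - a)) / (b - a) ≤ (d₀ + d₁ + α * b) / (a + b) ↔
      α ≤ (1 + (a + b) / |a - b|) * (d₀ / a - d₁ / b) := by
  rw [le_iff_of_sub_eq_pos_mul (div_pos ha (by linarith)) (tripleSlope_sub_C3 ha hab), sub_nonneg,
    abs_sub_comm, abs_of_pos (sub_pos.2 hab)]

end TripleSlope

/-- Stability interval for triples: for `n_0 ≠ n_1` the conditions (C1)–(C3) hold
iff `α_min ≤ α ≤ α_max`; for `n_0 = n_1` condition (C1) alone applies and holds iff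
`α ≥ α_min`. Here `α_min = d_0/n_0 − d_1/n_1` and
`α_max = (1 + (n_0+n_1)/|n_0−n_1|)·(d_0/n_0 − d_1/n_1)`. -/
theorem triple_stability_interval (n0 n1 : ℕ) (h0 : 1 ≤ n0) (h1 : 1 ≤ n1)
    (d0 d1 : ℤ) (α : ℝ) :
    (n0 ≠ n1 →
      (((d0 : ℝ) / n0 ≤ ((d0 : ℝ) + d1 + α * n1) / ((n0 : ℝ) + n1) ∧
          (n1 < n0 →
            (2 * (d1 : ℝ) + α * n1) / (2 * (n1 : ℝ)) ≤
              ((d0 : ℝ) + d1 + α * n1) / ((n0 : ℝ) + n1)) ∧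
          (n0 < n1 →
            ((d1 : ℝ) - d0 + α * ((n1 : ℝ) - n0)) / ((n1 : ℝ) - n0) ≤
              ((d0 : ℝ) + d1 + α * n1) / ((n0 : ℝ) + n1))) ↔
        ((d0 : ℝ) / n0 - (d1 : ℝ) / n1 ≤ α ∧
          α ≤ (1 + ((n0 : ℝ) + n1) / |(n0 : ℝ) - n1|) *
            ((d0 : ℝ) / n0 - (d1 : ℝ) / n1)))) ∧
    (n0 = n1 →
      ((d0 : ℝ) / n0 ≤ ((d0 : ℝ) + d1 + α * n1) / ((n0 : ℝ) + n1) ↔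
        (d0 : ℝ) / n0 - (d1 : ℝ) / n1 ≤ α)) := by
  have ha : (0 : ℝ) < n0 := by exact_mod_cast h0
  have hb : (0 : ℝ) < n1 := by exact_mod_cast h1
  refine ⟨fun hne => ?_, fun _ => tripleC1_iff ha hb⟩
  rw [← tripleC1_iff ha hb]
  rcases hne.lt_or_gt with hlt | hlt
  · have hC3 := tripleC3_iff (d₀ := (d0 : ℝ)) (d₁ := d1) (α := α) ha (Nat.cast_lt.2 hlt)
    simp only [hlt, hlt.not_gt, false_imp_iff, forall_const, true_and, hC3]
  · have hC2 := tripleC2_iff (d₀ := (d0 : ℝ)) (d₁ := d1) (α := α) hb (Nat.cast_lt.2 hlt)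
    simp only [hlt, hlt.not_gt, false_imp_iff, forall_const, and_true, hC2]
end
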